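/- For every nonnegative integer n, there exist integers x, y, z such that n = 3x² + y(3y+1) + z(3z+2). -/

import Mathlib

/-!
Multiplying by 12 and completing squares, `n = 3x² + y(3y+1) + z(3z+2)` becomes
`12n + 5 = (6y+1)² + (6z+2)² + 36x²`. Since `12n + 5 ≡ 1 (mod 4)`, it is a sum of three squares
(Legendre, via Dirichlet's theorem and the reduction theory of positive definite integral ternary
forms of determinant one). A descent on the `3`-adic valuation of the coordinate divisible by `3`,
using the rational orthogonal matrix `(1/3)·[[1,2,2],[2,1,-2],[2,-2,1]]`, makes that coordinate
divisible by `6`; the other two coordinates are then `≡ ±1` and `≡ ±2 (mod 6)`.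
-/

def binForm (a b c x y : ℤ) : ℤ := a * x ^ 2 + 2 * b * x * y + c * y ^ 2

def binPolar (a b c x y x' y' : ℤ) : ℤ := a * x * x' + b * (x * y' + y * x') + c * y * y'

def BinPosDef (a b c : ℤ) : Prop := ∀ x y, x ≠ 0 ∨ y ≠ 0 → 0 < binForm a b c x y

-- Gram matrix `[[a, p, q], [p, b, r], [q, r, c]]`; `ternDet` is its determinant.
def ternForm (a b c p q r x y z : ℤ) : ℤ :=
  a * x ^ 2 + b * y ^ 2 + c * z ^ 2 + 2 * (p * x * y + q * x * z + r * y * z)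

def ternPolar (a b c p q r x y z x' y' z' : ℤ) : ℤ :=
  a * x * x' + b * y * y' + c * z * z' + p * (x * y' + y * x') + q * (x * z' + z * x') +
    r * (y * z' + z * y')

def ternDet (a b c p q r : ℤ) : ℤ :=
  a * b * c + 2 * p * q * r - a * r ^ 2 - b * q ^ 2 - c * p ^ 2

def TernPosDef (a b c p q r : ℤ) : Prop :=
  ∀ x y z, x ≠ 0 ∨ y ≠ 0 ∨ z ≠ 0 → 0 < ternForm a b c p q r x y z

lemma exists_four_mul_sq_add_le (a t : ℤ) (ha : 0 < a) : ∃ x, 4 * (a * x + t) ^ 2 ≤ a ^ 2 := by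
  have hdiv := Int.emod_add_mul_ediv t a
  have hnonneg := Int.emod_nonneg t ha.ne'
  have hlt := Int.emod_lt_of_pos t ha
  rcases le_or_gt (2 * (t % a)) a with h | h
  · exact ⟨-(t / a), by nlinarith⟩
  · exact ⟨-(t / a) - 1, by nlinarith⟩

lemma binForm_subst (a b c e f g h u v : ℤ) :
    binForm a b c (e * u + f * v) (g * u + h * v) =
      binForm (binForm a b c e g) (binPolar a b c e g f h) (binForm a b c f h) u v := by
  simp only [binForm, binPolar]; ring

lemma binForm_mul_binForm_sub_binPolar_sq (a b c e f g h : ℤ) :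
    binForm a b c e g * binForm a b c f h - binPolar a b c e g f h ^ 2 =
      (e * h - f * g) ^ 2 * (a * c - b ^ 2) := by
  simp only [binForm, binPolar]; ring

lemma mul_binForm (a b c x y : ℤ) :
    a * binForm a b c x y = (a * x + b * y) ^ 2 + (a * c - b ^ 2) * y ^ 2 := by
  simp only [binForm]; ring

lemma BinPosDef.pos {a b c : ℤ} (hN : BinPosDef a b c) : 0 < a := by
  simpa [binForm] using hN 1 0 (by simp)

lemma BinPosDef.subst {a b c e f g h : ℤ} (hN : BinPosDef a b c) (hdet : e * h - f * g = 1) :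
    BinPosDef (binForm a b c e g) (binPolar a b c e g f h) (binForm a b c f h) := by
  intro u v huv
  rw [← binForm_subst]
  apply hN
  by_contra! ⟨h₁, h₂⟩
  have hu : u = 0 := by linear_combination h * h₁ - f * h₂ - u * hdet
  have hv : v = 0 := by linear_combination e * h₂ - g * h₁ - v * hdet
  simp [hu, hv] at huv

/-- Lagrange reduction: while `3a² > 4(ac - b²)`, the substitution `(u, v) ↦ (x u - v, u)` with
`|a x + b| ≤ a / 2` strictly lowers the first coefficient. -/
theorem BinPosDef.exists_three_mul_sq_le {a b c : ℤ} (hN : BinPosDef a b c) :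
    ∃ e f g h, e * h - f * g = 1 ∧ 3 * binForm a b c e g ^ 2 ≤ 4 * (a * c - b ^ 2) := by
  by_cases hsmall : 3 * a ^ 2 ≤ 4 * (a * c - b ^ 2)
  · exact ⟨1, 0, 0, 1, by ring, by simpa [binForm] using hsmall⟩
  have ha := hN.pos
  obtain ⟨x, hx⟩ := exists_four_mul_sq_add_le a b ha
  have hlt : binForm a b c x 1 < a := by
    have := mul_binForm a b c x 1
    nlinarith
  have hdet : x * 0 - (-1) * 1 = (1 : ℤ) := by ring
  obtain ⟨e, f, g, h, hS, hval⟩ := (hN.subst hdet).exists_three_mul_sq_le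
  refine ⟨x * e + (-1) * g, x * f + (-1) * h, 1 * e + 0 * g, 1 * f + 0 * h,
    by linear_combination hS, ?_⟩
  rw [binForm_mul_binForm_sub_binPolar_sq, hdet] at hval
  rw [binForm_subst]
  linarith
termination_by a.toNat
decreasing_by
  have := (hN.subst hdet).pos
  omega

theorem BinPosDef.exists_eq_sq_add_sq {a b c : ℤ} (hN : BinPosDef a b c)
    (hdet : a * c - b ^ 2 = 1) (x y : ℤ) : ∃ s t, binForm a b c x y = s ^ 2 + t ^ 2 := by
  obtain ⟨e, f, g, h, hS, hsmall⟩ := hN.exists_three_mul_sq_le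
  have hpos := hN e g (by by_contra! h0; simp [h0.1, h0.2] at hS)
  have h1 : binForm a b c e g = 1 := by nlinarith
  have hC := binForm_mul_binForm_sub_binPolar_sq a b c e f g h
  rw [h1, hS, hdet] at hC
  have hx : e * (h * x - f * y) + f * (e * y - g * x) = x := by linear_combination x * hS
  have hy : g * (h * x - f * y) + h * (e * y - g * x) = y := by linear_combination y * hS
  refine ⟨h * x - f * y + binPolar a b c e g f h * (e * y - g * x), e * y - g * x, ?_⟩
  have hsub := binForm_subst a b c e f g h (h * x - f * y) (e * y - g * x)
  rw [hx, hy, h1] at hsub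
  rw [hsub, binForm]
  linear_combination (e * y - g * x) ^ 2 * hC

lemma ternForm_subst (a b c p q r e₀ e₁ e₂ f₀ f₁ f₂ g₀ g₁ g₂ x y z : ℤ) :
    ternForm a b c p q r (e₀ * x + f₀ * y + g₀ * z) (e₁ * x + f₁ * y + g₁ * z)
        (e₂ * x + f₂ * y + g₂ * z) =
      ternForm (ternForm a b c p q r e₀ e₁ e₂) (ternForm a b c p q r f₀ f₁ f₂)
        (ternForm a b c p q r g₀ g₁ g₂) (ternPolar a b c p q r e₀ e₁ e₂ f₀ f₁ f₂)
        (ternPolar a b c p q r e₀ e₁ e₂ g₀ g₁ g₂) (ternPolar a b c p q r f₀ f₁ f₂ g₀ g₁ g₂)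
        x y z := by
  simp only [ternForm, ternPolar]; ring

lemma ternDet_subst (a b c p q r e₀ e₁ e₂ f₀ f₁ f₂ g₀ g₁ g₂ : ℤ) :
    ternDet (ternForm a b c p q r e₀ e₁ e₂) (ternForm a b c p q r f₀ f₁ f₂)
        (ternForm a b c p q r g₀ g₁ g₂) (ternPolar a b c p q r e₀ e₁ e₂ f₀ f₁ f₂)
        (ternPolar a b c p q r e₀ e₁ e₂ g₀ g₁ g₂) (ternPolar a b c p q r f₀ f₁ f₂ g₀ g₁ g₂) =
      (e₀ * (f₁ * g₂ - g₁ * f₂) - f₀ * (e₁ * g₂ - g₁ * e₂) + g₀ * (e₁ * f₂ - f₁ * e₂)) ^ 2 *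
        ternDet a b c p q r := by
  simp only [ternForm, ternPolar, ternDet]; ring

lemma mul_ternForm (a b c p q r x y z : ℤ) :
    a * ternForm a b c p q r x y z =
      (a * x + p * y + q * z) ^ 2 +
        binForm (a * b - p ^ 2) (a * r - p * q) (a * c - q ^ 2) y z := by
  simp only [ternForm, binForm]; ring

lemma binDet_eq_mul_ternDet (a b c p q r : ℤ) :
    (a * b - p ^ 2) * (a * c - q ^ 2) - (a * r - p * q) ^ 2 = a * ternDet a b c p q r := by
  simp only [ternDet]; ring

lemma TernPosDef.pos {a b c p q r : ℤ} (hQ : TernPosDef a b c p q r) : 0 < a := by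
  simpa [ternForm] using hQ 1 0 0 (by simp)

lemma TernPosDef.binPosDef {a b c p q r : ℤ} (hQ : TernPosDef a b c p q r) :
    BinPosDef (a * b - p ^ 2) (a * r - p * q) (a * c - q ^ 2) := by
  intro y z hyz
  have ha := hQ.pos
  have hval : ternForm a b c p q r (-(p * y + q * z)) (a * y) (a * z) =
      a * binForm (a * b - p ^ 2) (a * r - p * q) (a * c - q ^ 2) y z := by
    simp only [ternForm, binForm]; ring
  have := hQ (-(p * y + q * z)) (a * y) (a * z) (Or.inr (by simpa [ha.ne'] using hyz))
  rw [hval] at this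
  exact pos_of_mul_pos_right this ha.le

/-- Write `a Q = (a x + p y + q z)² + N(y, z)` with `N` of determinant `a`. Reducing `N` gives a
primitive `(e, g)` with `N(e, g) ≤ √(4a/3)`, and for a suitable `x₀` then
`a Q(x₀, e, g) ≤ a²/4 + √(4a/3) < a²` as soon as `a ≥ 2`. -/
lemma TernPosDef.exists_lt {a b c p q r : ℤ} (hQ : TernPosDef a b c p q r)
    (hdet : ternDet a b c p q r = 1) (ha : 2 ≤ a) :
    ∃ x₀ e f g h, e * h - f * g = 1 ∧ ternForm a b c p q r x₀ e g < a := by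
  obtain ⟨e, f, g, h, hS, hsmall⟩ := hQ.binPosDef.exists_three_mul_sq_le
  rw [binDet_eq_mul_ternDet, hdet, mul_one] at hsmall
  have hN := hQ.binPosDef e g (by by_contra! h0; simp [h0.1, h0.2] at hS)
  obtain ⟨x₀, hx₀⟩ := exists_four_mul_sq_add_le a (p * e + q * g) (by omega)
  have hsplit := mul_ternForm a b c p q r x₀ e g
  refine ⟨x₀, e, f, g, h, hS, ?_⟩
  set N := binForm (a * b - p ^ 2) (a * r - p * q) (a * c - q ^ 2) e g
  have hN3 : 4 * N < 3 * a ^ 2 := by nlinarith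
  nlinarith

/-- Descent on the first coefficient via `TernPosDef.exists_lt`; once it is `1`, completing the
square leaves a binary form of determinant one. -/
theorem TernPosDef.exists_eq_sum_three_sq {a b c p q r : ℤ} (hQ : TernPosDef a b c p q r)
    (hdet : ternDet a b c p q r = 1) (x y z : ℤ) :
    ∃ s t u, ternForm a b c p q r x y z = s ^ 2 + t ^ 2 + u ^ 2 := by
  obtain rfl | ha := (show a = 1 ∨ 2 ≤ a by have := hQ.pos; omega)
  · obtain ⟨s, t, hst⟩ := hQ.binPosDef.exists_eq_sq_add_sq
      (by rw [binDet_eq_mul_ternDet, hdet, one_mul]) y z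
    refine ⟨x + p * y + q * z, s, t, ?_⟩
    linear_combination mul_ternForm 1 b c p q r x y z + hst
  obtain ⟨x₀, e, f, g, h, hS, hlt⟩ := hQ.exists_lt hdet ha
  -- the substitution `(x, y, z) ↦ (x₀ x - y, e x + f z, g x + h z)` of determinant one
  have hsub := ternForm_subst a b c p q r x₀ e g (-1) 0 0 0 f h
  have hQ' : TernPosDef _ _ _ _ _ _ := fun x' y' z' hne ↦ by
    rw [← hsub]
    apply hQ
    by_contra! ⟨h₀, h₁, h₂⟩
    have hx : x' = 0 := by linear_combination h * h₁ - f * h₂ - x' * hS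
    have hz : z' = 0 := by linear_combination e * h₂ - g * h₁ - z' * hS
    have hy : y' = 0 := by linear_combination x₀ * hx - h₀
    simp [hx, hy, hz] at hne
  have hdet' := ternDet_subst a b c p q r x₀ e g (-1) 0 0 0 f h
  rw [hdet, mul_one] at hdet'
  obtain ⟨s, t, u, hstu⟩ := hQ'.exists_eq_sum_three_sq
    (hdet'.trans (by linear_combination (e * h - f * g + 1) * hS))
    (h * y - f * z) (x₀ * (h * y - f * z) - x) (e * z - g * y)
  refine ⟨s, t, u, ?_⟩
  rw [← hstu, ← hsub]
  congr 1
  · ring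
  · linear_combination (-y) * hS
  · linear_combination (-z) * hS
termination_by a.toNat
decreasing_by
  have := hQ'.pos
  omega

lemma exists_eq_sum_three_sq_of_dvd {m P e f g : ℤ} (hm : 0 < m) (hP : 0 < P)
    (he : m * e = P + 1) (hg : P * g = 1 + m * f ^ 2) :
    ∃ s t u, m = s ^ 2 + t ^ 2 + u ^ 2 := by
  have hdet : ternDet m e g 1 0 f = 1 := by
    simp only [ternDet]; linear_combination g * he + hg
  have hQ : TernPosDef m e g 1 0 f := by
    intro x y z hne
    have hid : P * m * ternForm m e g 1 0 f x y z =
        P * (m * x + y) ^ 2 + (P * y + m * f * z) ^ 2 + m * z ^ 2 := by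
      simp only [ternForm]; linear_combination (P * y ^ 2) * he + (m * z ^ 2) * hg
    have hsum : 0 < P * (m * x + y) ^ 2 + (P * y + m * f * z) ^ 2 + m * z ^ 2 := by
      rcases eq_or_ne z 0 with rfl | hz
      · rcases eq_or_ne y 0 with rfl | hy
        · have hx : x ≠ 0 := by simpa using hne
          have : 0 < (m * x) ^ 2 := by positivity
          nlinarith
        · have : 0 < (P * y) ^ 2 := by positivity
          nlinarith [sq_nonneg (m * x + y)]
      · have : 0 < m * z ^ 2 := by positivity
        nlinarith [sq_nonneg (m * x + y), sq_nonneg (P * y + m * f * z)]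
    exact pos_of_mul_pos_right (hid ▸ hsum) (by positivity)
  obtain ⟨s, t, u, h⟩ := hQ.exists_eq_sum_three_sq hdet 1 0 0
  exact ⟨s, t, u, by simpa [ternForm] using h⟩

lemma exists_prime_mod_four_eq_one_dvd_add_one (m : ℕ) (hm : m % 4 = 1) :
    ∃ P : ℕ, P.Prime ∧ 4 * m < P ∧ P % 4 = 1 ∧ (m : ℤ) ∣ P + 1 := by
  obtain ⟨P, hPm, hP, hmod⟩ := Nat.forall_exists_prime_gt_and_zmodEq (4 * m) (q := 4 * m)
    (a := 2 * m - 1) (by omega) ⟨-(2 * m + 1), m, by push_cast; ring⟩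
  obtain ⟨k, hk⟩ := hmod.dvd
  refine ⟨P, hP, hPm, ?_, ⟨2 - 4 * k, by push_cast at hk ⊢; linear_combination -hk⟩⟩
  push_cast at hk
  rw [mul_assoc] at hk
  generalize (m : ℤ) * k = t at hk
  omega

lemma exists_dvd_one_add_mul_sq {m P : ℕ} [Fact P.Prime] (hm : m % 4 = 1) (hP : P % 4 = 1)
    (hmP : (m : ℤ) ∣ P + 1) (hPm : ¬ P ∣ m) : ∃ f : ℤ, (P : ℤ) ∣ 1 + m * f ^ 2 := by
  have hPodd : Odd P := Nat.odd_iff.mpr (by omega)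
  have hPm1 : (P : ℤ) ≡ -1 [ZMOD m] :=
    Int.modEq_iff_dvd.mpr (by rw [show (-1 : ℤ) - P = -(P + 1) by ring]; exact hmP.neg_right)
  have hJ : jacobiSym (-m) P = 1 := by
    rw [jacobiSym.neg _ hPodd, ZMod.χ₄_nat_one_mod_four hP, one_mul,
      jacobiSym.quadratic_reciprocity_one_mod_four hm hPodd, jacobiSym.mod_left' hPm1,
      jacobiSym.at_neg_one (Nat.odd_iff.mpr (by omega)), ZMod.χ₄_nat_one_mod_four hm]
  obtain ⟨s, hs⟩ := ZMod.isSquare_of_jacobiSym_eq_one hJ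
  have hm0 : (m : ZMod P) ≠ 0 := by rwa [Ne, ZMod.natCast_eq_zero_iff]
  obtain ⟨f, hf⟩ := ZMod.intCast_surjective (s / m : ZMod P)
  refine ⟨f, (ZMod.intCast_zmod_eq_zero_iff_dvd _ P).mp ?_⟩
  push_cast at hs ⊢
  rw [hf]
  field_simp
  linear_combination -hs

theorem exists_eq_sum_three_sq_of_mod_four_eq_one (m : ℕ) (hm : m % 4 = 1) :
    ∃ s t u : ℤ, m = s ^ 2 + t ^ 2 + u ^ 2 := by
  obtain ⟨P, hP, hPm, hP4, e, he⟩ := exists_prime_mod_four_eq_one_dvd_add_one m hm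
  have := Fact.mk hP
  obtain ⟨f, g, hg⟩ := exists_dvd_one_add_mul_sq hm hP4 ⟨e, he⟩
    (fun h ↦ by have := Nat.le_of_dvd (by omega) h; omega)
  exact exists_eq_sum_three_sq_of_dvd (by omega) (by omega) he.symm hg.symm

lemma sq_emod_three (x : ℤ) : x % 3 = 0 ∧ x ^ 2 % 3 = 0 ∨ x % 3 ≠ 0 ∧ x ^ 2 % 3 = 1 := by
  have h : x ^ 2 = 3 * (3 * (x / 3) ^ 2 + 2 * (x / 3) * (x % 3)) + (x % 3) ^ 2 := by
    conv_lhs => rw [← Int.mul_ediv_add_emod x 3]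
    ring
  rcases (by omega : x % 3 = 0 ∨ x % 3 = 1 ∨ x % 3 = 2) with h' | h' | h' <;>
    rw [h'] at h <;> omega

lemma sq_emod_four (x : ℤ) : x ^ 2 % 4 = x % 2 := by
  have h : x ^ 2 = 4 * ((x / 2) ^ 2 + (x / 2) * (x % 2)) + (x % 2) ^ 2 := by
    conv_lhs => rw [← Int.mul_ediv_add_emod x 2]
    ring
  rcases (by omega : x % 2 = 0 ∨ x % 2 = 1) with h' | h' <;> rw [h'] at h <;> omega

lemma exists_sq_eq_sq_six_mul_add {u r : ℤ} (h : u % 6 = r ∨ u % 6 = 6 - r) :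
    ∃ y, u ^ 2 = (6 * y + r) ^ 2 := by
  rcases h with h | h
  · exact ⟨u / 6, by congr 1; omega⟩
  · have hu : u + (6 * (-(u / 6) - 1) + r) = 0 := by omega
    exact ⟨-(u / 6) - 1, by linear_combination (u - (6 * (-(u / 6) - 1) + r)) * hu⟩

/-- `(A, B, C)` is the image of `(a, b, 3d)` under the orthogonal matrix
`(1/3)·[[1,2,2],[2,1,-2],[2,-2,1]]`, integral because `a ≡ b (mod 3)`. -/
lemma exists_sq_add_sq_add_nine_mul_sq_eq (a b d : ℤ) (hab : 3 ∣ a - b) :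
    ∃ A B C, a ^ 2 + b ^ 2 + 9 * d ^ 2 = A ^ 2 + B ^ 2 + C ^ 2 ∧ 3 * A = a + 2 * b + 6 * d ∧
      3 * B = 2 * a + b - 6 * d ∧ 3 * C = 2 * a - 2 * b + 3 * d := by
  obtain ⟨A, hA⟩ : 3 ∣ a + 2 * b + 6 * d := by omega
  obtain ⟨B, hB⟩ : 3 ∣ 2 * a + b - 6 * d := by omega
  obtain ⟨C, hC⟩ : 3 ∣ 2 * a - 2 * b + 3 * d := by omega
  refine ⟨A, B, C, mul_left_cancel₀ (by norm_num : (9 : ℤ) ≠ 0) ?_, by omega, by omega, by omega⟩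
  linear_combination (a + 2 * b + 6 * d + 3 * A) * hA + (2 * a + b - 6 * d + 3 * B) * hB +
    (2 * a - 2 * b + 3 * d + 3 * C) * hC

def Rep36 (M : ℤ) : Prop := ∃ u v w, M = u ^ 2 + v ^ 2 + 36 * w ^ 2

lemma Rep36.of_six_dvd {M A B C : ℤ} (h : M = A ^ 2 + B ^ 2 + C ^ 2) (hA : 6 ∣ A) :
    Rep36 M := by
  obtain ⟨w, rfl⟩ := hA
  exact ⟨B, C, w, by rw [h]; ring⟩

lemma rep36_or_three_dvd {M A B C : ℤ} (hM : M % 3 = 2) (h : M = A ^ 2 + B ^ 2 + C ^ 2)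
    (hA : 2 ∣ A) (hB : 2 ∣ B) : Rep36 M ∨ 3 ∣ C := by
  rcases sq_emod_three A with hA3 | hA3
  · exact .inl (Rep36.of_six_dvd h (by omega))
  rcases sq_emod_three B with hB3 | hB3
  · exact .inl (Rep36.of_six_dvd (show M = B ^ 2 + A ^ 2 + C ^ 2 by rw [h]; ring) (by omega))
  have := sq_emod_three C
  exact .inr (by omega)

lemma emod_two_and_three_dvd_of_odd {M a b d : ℤ} (hM : M % 12 = 5)
    (h : M = a ^ 2 + b ^ 2 + 9 * d ^ 2) (hd : d % 2 = 1) :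
    a % 2 = 0 ∧ b % 2 = 0 ∧ 3 ∣ (a - b) * (a - -b) := by
  have := sq_emod_four a
  have := sq_emod_four b
  have := sq_emod_four d
  have := sq_emod_three a
  have := sq_emod_three b
  rw [show (a - b) * (a - -b) = a ^ 2 - b ^ 2 by ring]
  omega

lemma not_pow_dvd_or_not_pow_dvd {d d₁ d₂ : ℤ} {j : ℕ} (h : 3 * (d₁ - d₂) = 2 * d)
    (hd : ¬ 3 ^ (j + 1) ∣ d) : ¬ 3 ^ j ∣ d₁ ∨ ¬ 3 ^ j ∣ d₂ := by
  by_contra! ⟨h₁, h₂⟩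
  have h2d : 3 ^ (j + 1) ∣ 2 * d := h ▸ pow_succ' (3 : ℤ) j ▸ mul_dvd_mul_left 3 (dvd_sub h₁ h₂)
  exact hd ((IsCoprime.pow_left ⟨1, -1, by norm_num⟩).dvd_of_dvd_mul_left h2d)

/-- Reflecting `(a, b, ±3d)` gives `(A₁, B₁, 3d₁)` and `(A₂, B₂, 3d₂)` with `3(d₁ - d₂) = 2d`,
so one of `d₁, d₂` has smaller `3`-adic valuation than `d`. -/
lemma Rep36.of_not_pow_dvd {M : ℤ} (hM : M % 12 = 5) (j : ℕ) :
    ∀ a b d, ¬ 3 ^ j ∣ d → M = a ^ 2 + b ^ 2 + 9 * d ^ 2 → Rep36 M := by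
  induction j with
  | zero => simp
  | succ j ih =>
    intro a b d hd h
    obtain ⟨k, rfl⟩ | hodd := Int.even_or_odd d
    · exact ⟨a, b, k, by rw [h]; ring⟩
    obtain ⟨ha2, hb2, hab⟩ := emod_two_and_three_dvd_of_odd hM h (Int.odd_iff.mp hodd)
    obtain ⟨b', hb', hb'2, hab⟩ : ∃ b', b' ^ 2 = b ^ 2 ∧ b' % 2 = 0 ∧ 3 ∣ a - b' := by
      rcases Int.prime_three.dvd_or_dvd hab with hab | hab
      · exact ⟨b, rfl, hb2, hab⟩
      · exact ⟨-b, by ring, by omega, hab⟩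
    rw [← hb'] at h
    obtain ⟨A₁, B₁, C₁, h₁, hA₁, hB₁, hC₁⟩ := exists_sq_add_sq_add_nine_mul_sq_eq a b' d hab
    obtain ⟨A₂, B₂, C₂, h₂, hA₂, hB₂, hC₂⟩ := exists_sq_add_sq_add_nine_mul_sq_eq a b' (-d) hab
    rw [neg_sq] at h₂
    have hM3 : M % 3 = 2 := by omega
    obtain hdone | ⟨d₁, hd₁⟩ := rep36_or_three_dvd hM3 (h.trans h₁) (by omega) (by omega)
    · exact hdone
    obtain hdone | ⟨d₂, hd₂⟩ := rep36_or_three_dvd hM3 (h.trans h₂) (by omega) (by omega)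
    · exact hdone
    rcases not_pow_dvd_or_not_pow_dvd (d₁ := d₁) (d₂ := d₂) (by omega) hd with hv | hv
    · exact ih A₁ B₁ d₁ hv (by rw [h, h₁, hd₁]; ring)
    · exact ih A₂ B₂ d₂ hv (by rw [h, h₂, hd₂]; ring)

theorem Rep36.of_eq_sum_three_sq {M x y z : ℤ} (hM : M % 12 = 5)
    (h : M = x ^ 2 + y ^ 2 + z ^ 2) : Rep36 M := by
  have of_nine : ∀ a b d, M = a ^ 2 + b ^ 2 + 9 * d ^ 2 → Rep36 M := by
    intro a b d h
    rcases eq_or_ne d 0 with rfl | hd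
    · exact ⟨a, b, 0, by rw [h]; ring⟩
    obtain ⟨j, hj⟩ := (Int.finiteMultiplicity_iff (a := 3)).mpr ⟨by norm_num, hd⟩
    exact Rep36.of_not_pow_dvd hM _ a b d hj h
  have := sq_emod_three x
  have := sq_emod_three y
  have := sq_emod_three z
  rcases (by omega : 3 ∣ x ∨ 3 ∣ y ∨ 3 ∣ z) with ⟨d, rfl⟩ | ⟨d, rfl⟩ | ⟨d, rfl⟩
  · exact of_nine y z d (by rw [h]; ring)
  · exact of_nine x z d (by rw [h]; ring)
  · exact of_nine x y d (by rw [h]; ring)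

theorem Rep36.exists_eq_six_mul_add_sq {M : ℤ} (hM : M % 12 = 5) (h : Rep36 M) :
    ∃ x y z, M = (6 * y + 1) ^ 2 + (6 * z + 2) ^ 2 + 36 * x ^ 2 := by
  obtain ⟨u, v, w, h⟩ := h
  have := sq_emod_three u
  have := sq_emod_three v
  have := sq_emod_four u
  have := sq_emod_four v
  rcases (by omega : u % 2 = 1 ∨ v % 2 = 1) with hu | hv
  · obtain ⟨y, hy⟩ := exists_sq_eq_sq_six_mul_add (u := u) (r := 1) (by omega)
    obtain ⟨z, hz⟩ := exists_sq_eq_sq_six_mul_add (u := v) (r := 2) (by omega)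
    exact ⟨w, y, z, by rw [h, hy, hz]⟩
  · obtain ⟨y, hy⟩ := exists_sq_eq_sq_six_mul_add (u := v) (r := 1) (by omega)
    obtain ⟨z, hz⟩ := exists_sq_eq_sq_six_mul_add (u := u) (r := 2) (by omega)
    exact ⟨w, y, z, by rw [h, hy, hz]; ring⟩

theorem stmt_17 (n : ℕ) : ∃ x y z : ℤ, (n : ℤ) = 3*x^2 + y*(3*y+1) + z*(3*z+2) := by
  obtain ⟨a, b, c, habc⟩ := exists_eq_sum_three_sq_of_mod_four_eq_one (12 * n + 5) (by omega)
  push_cast at habc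
  have hrep : Rep36 (12 * n + 5) := Rep36.of_eq_sum_three_sq (by omega) habc
  obtain ⟨x, y, z, h⟩ := hrep.exists_eq_six_mul_add_sq (by omega)
  exact ⟨x, y, z, by linarith⟩
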